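/- Suppose λ ∈ E is regular, i.e. (λ,α) ≠ 0 for all α ∈ Δ, and admissible, i.e. (λ − ρ(λ), α∨) ∈ ℤ for all α ∈ Δ. Then (λ − ρ(λ), α) ≥ 0 for every α ∈ Δ with (α,λ) > 0; i.e. λ ∈ ρ(λ) + C_λ, where C_λ = {ξ ∈ E : (ξ,α) ≥ 0 for all α ∈ Δ with (α,λ) > 0} is the closed Weyl chamber determined by λ. (Regular admissible elements are very regular.) -/

import Mathlib

/-!
Write `Δ⁺ = {α ∈ Δ : (α, λ) > 0}` and call `α ∈ Δ⁺` simple if it is not the sum of two elements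
of `Δ⁺`. Every element of `Δ⁺` is a sum of simple ones, so it suffices to treat a simple `α`.
The reflection `s_α` permutes `Δ⁺ \ {α}`: if `β` were a counterexample with `(β, λ)` minimal,
then `β - α` would be a smaller one, since otherwise `α = s_α (β - α) + (-s_α β)` decomposes.
Hence `(ρ(λ), α∨) = 1`, and the integer `(λ - ρ(λ), α∨) = (λ, α∨) - 1` is `> -1`, so `≥ 0`.
-/

open scoped RealInnerProductSpace
open Finset

theorem Finset.induction_on_image_lt {ι α : Type*} [LinearOrder α] (s : Finset ι) (f : ι → α)
    {p : ι → Prop} (h : ∀ x ∈ s, (∀ y ∈ s, f y < f x → p y) → p x) : ∀ x ∈ s, p x := by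
  classical
  by_contra! hne
  obtain ⟨x, hx, hmin⟩ :=
    (s.filter (¬ p ·)).exists_min_image f (by simpa [Finset.Nonempty] using hne)
  rw [mem_filter] at hx
  refine hx.2 (h x hx.1 fun y hy hlt => ?_)
  by_contra hpy
  exact (hmin y (mem_filter.2 ⟨hy, hpy⟩)).not_gt hlt

section

variable {E : Type*} [NormedAddCommGroup E] [InnerProductSpace ℝ E]

noncomputable def rootReflection (α β : E) : E := β - (2 * ⟪β, α⟫ / ⟪α, α⟫) • α

theorem inner_rootReflection (α β x : E) :
    ⟪rootReflection α β, x⟫ = ⟪β, x⟫ - 2 * ⟪β, α⟫ / ⟪α, α⟫ * ⟪α, x⟫ := by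
  rw [rootReflection, inner_sub_left, real_inner_smul_left]

theorem inner_rootReflection_self (α β : E) : ⟪rootReflection α β, α⟫ = -⟪β, α⟫ := by
  rcases eq_or_ne α 0 with rfl | hα
  · simp [rootReflection]
  · have := (real_inner_self_pos.2 hα).ne'
    rw [inner_rootReflection]
    field_simp
    ring

theorem rootReflection_self (α : E) : rootReflection α α = -α := by
  rcases eq_or_ne α 0 with rfl | hα
  · simp [rootReflection]
  · rw [rootReflection, mul_div_assoc, div_self (real_inner_self_pos.2 hα).ne', mul_one,
      two_smul, sub_add_cancel_left]

theorem rootReflection_rootReflection (α β : E) : rootReflection α (rootReflection α β) = β := by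
  rw [rootReflection, inner_rootReflection_self, rootReflection, mul_neg, neg_div, neg_smul,
    sub_neg_eq_add, sub_add_cancel]

structure IsReducedRootSystem (Δ : Finset E) : Prop where
  zero_notMem : (0 : E) ∉ Δ
  eq_one_or_eq_neg_one_of_smul_mem : ∀ α ∈ Δ, ∀ t : ℝ, t • α ∈ Δ → t = 1 ∨ t = -1
  rootReflection_mem : ∀ α ∈ Δ, ∀ β ∈ Δ, rootReflection α β ∈ Δ
  exists_int_pairing : ∀ α ∈ Δ, ∀ β ∈ Δ, ∃ n : ℤ, 2 * ⟪β, α⟫ / ⟪α, α⟫ = (n : ℝ)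

namespace IsReducedRootSystem

variable {Δ : Finset E} {α β : E}

theorem ne_zero (hΔ : IsReducedRootSystem Δ) (hα : α ∈ Δ) : α ≠ 0 :=
  fun h => hΔ.zero_notMem (h ▸ hα)

theorem neg_mem (hΔ : IsReducedRootSystem Δ) (hα : α ∈ Δ) : -α ∈ Δ :=
  rootReflection_self α ▸ hΔ.rootReflection_mem α hα α hα

theorem inner_mul_inner_lt (hΔ : IsReducedRootSystem Δ) (hα : α ∈ Δ) (hβ : β ∈ Δ)
    (hne : β ≠ α) (hne' : β ≠ -α) : ⟪α, β⟫ * ⟪α, β⟫ < ⟪α, α⟫ * ⟪β, β⟫ := by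
  refine (real_inner_mul_inner_self_le α β).lt_of_ne fun h => ?_
  have hnorm : ‖⟪α, β⟫‖ = ‖α‖ * ‖β‖ := by
    rw [Real.norm_eq_abs, ← abs_of_nonneg (by positivity : 0 ≤ ‖α‖ * ‖β‖),
      ← sq_eq_sq_iff_abs_eq_abs]
    rw [real_inner_self_eq_norm_sq, real_inner_self_eq_norm_sq] at h
    linear_combination h
  obtain ⟨r, -, rfl⟩ := (norm_inner_eq_norm_iff (hΔ.ne_zero hα) (hΔ.ne_zero hβ)).1 hnorm
  rcases hΔ.eq_one_or_eq_neg_one_of_smul_mem α hα r hβ with rfl | rfl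
  · exact hne (one_smul ℝ α)
  · exact hne' (neg_one_smul ℝ α)

/-- Of the two Cartan integers of `α` and `β`, both positive with product `< 4`, one equals `1`,
and the corresponding reflection is `β - α` or `α - β`. -/
theorem sub_mem_of_inner_pos (hΔ : IsReducedRootSystem Δ) (hα : α ∈ Δ) (hβ : β ∈ Δ)
    (hne : β ≠ α) (hne' : β ≠ -α) (hpos : 0 < ⟪β, α⟫) : β - α ∈ Δ := by
  obtain ⟨k, hk⟩ := hΔ.exists_int_pairing α hα β hβ
  obtain ⟨m, hm⟩ := hΔ.exists_int_pairing β hβ α hα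
  have hαα := real_inner_self_pos.2 (hΔ.ne_zero hα)
  have hββ := real_inner_self_pos.2 (hΔ.ne_zero hβ)
  have hk0 : (0 : ℝ) < k := hk ▸ by positivity
  have hm0 : (0 : ℝ) < m := hm ▸ by rw [real_inner_comm]; positivity
  have hkm : (k : ℝ) * m < 4 := by
    rw [← hk, ← hm, div_mul_div_comm, div_lt_iff₀ (by positivity), real_inner_comm α β]
    nlinarith [hΔ.inner_mul_inner_lt hα hβ hne hne']
  have hk_or_hm : k = 1 ∨ m = 1 := by
    have : k * m < 4 := by exact_mod_cast hkm
    have : 0 < k := by exact_mod_cast hk0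
    have : 0 < m := by exact_mod_cast hm0
    by_contra! h
    have : 2 ≤ k := by omega
    have : 2 ≤ m := by omega
    nlinarith
  rcases hk_or_hm with rfl | rfl
  · have := hΔ.rootReflection_mem α hα β hβ
    rwa [rootReflection, hk, Int.cast_one, one_smul] at this
  · have := hΔ.neg_mem (hΔ.rootReflection_mem β hβ α hα)
    rwa [rootReflection, hm, Int.cast_one, one_smul, neg_sub] at this

end IsReducedRootSystem

noncomputable def positiveRoots (Δ : Finset E) (lam : E) : Finset E :=
  Δ.filter (fun β => 0 < ⟪β, lam⟫)

@[simp]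
theorem mem_positiveRoots {Δ : Finset E} {lam β : E} :
    β ∈ positiveRoots Δ lam ↔ β ∈ Δ ∧ 0 < ⟪β, lam⟫ :=
  mem_filter

def IsSimpleRoot (Δ : Finset E) (lam α : E) : Prop :=
  α ∈ Δ ∧ 0 < ⟪α, lam⟫ ∧ ∀ β ∈ Δ, ∀ γ ∈ Δ, 0 < ⟪β, lam⟫ → 0 < ⟪γ, lam⟫ → β + γ ≠ α

variable {Δ : Finset E} {lam : E}

theorem inner_nonneg_of_isSimpleRoot {x : E} (h : ∀ α, IsSimpleRoot Δ lam α → 0 ≤ ⟪x, α⟫) :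
    ∀ α ∈ Δ, 0 < ⟪α, lam⟫ → 0 ≤ ⟪x, α⟫ := by
  refine Finset.induction_on_image_lt Δ (⟪·, lam⟫) fun α hα ih hpos => ?_
  by_cases hs : IsSimpleRoot Δ lam α
  · exact h α hs
  · simp only [IsSimpleRoot, not_and, not_forall, not_not] at hs
    obtain ⟨β, hβ, γ, hγ, hβpos, hγpos, rfl⟩ := hs hα hpos
    rw [inner_add_right]
    exact add_nonneg (ih β hβ (by rw [inner_add_left]; linarith) hβpos)
      (ih γ hγ (by rw [inner_add_left]; linarith) hγpos)

namespace IsSimpleRoot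

variable {α : E}

theorem rootReflection_pos (hα : IsSimpleRoot Δ lam α) (hΔ : IsReducedRootSystem Δ)
    (hreg : ∀ β ∈ Δ, ⟪β, lam⟫ ≠ 0) :
    ∀ β ∈ Δ, 0 < ⟪β, lam⟫ → β ≠ α → 0 < ⟪rootReflection α β, lam⟫ := by
  obtain ⟨hαΔ, hαpos, hindec⟩ := hα
  have pos_or_neg_pos : ∀ γ ∈ Δ, 0 < ⟪γ, lam⟫ ∨ 0 < ⟪-γ, lam⟫ := fun γ hγ => by
    rw [inner_neg_left, neg_pos]
    exact (hreg γ hγ).lt_or_gt.symm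
  have hαα := real_inner_self_pos.2 (hΔ.ne_zero hαΔ)
  refine Finset.induction_on_image_lt Δ (⟪·, lam⟫) fun β hβ ih hβpos hβα => ?_
  by_contra hneg
  have hsβ : 0 < ⟪-rootReflection α β, lam⟫ :=
    (pos_or_neg_pos _ (hΔ.rootReflection_mem α hαΔ β hβ)).resolve_left hneg
  have hβα_pos : 0 < ⟪β, α⟫ := by
    rw [inner_neg_left, inner_rootReflection] at hsβ
    have hc : 0 < 2 * ⟪β, α⟫ / ⟪α, α⟫ := by
      by_contra! hc
      nlinarith
    have := mul_pos hc hαα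
    rw [div_mul_cancel₀ _ hαα.ne'] at this
    linarith
  have hβnα : β ≠ -α := by
    rintro rfl
    rw [inner_neg_left] at hβpos
    linarith
  have hδΔ : β - α ∈ Δ := hΔ.sub_mem_of_inner_pos hαΔ hβ hβα hβnα hβα_pos
  have hδpos : 0 < ⟪β - α, lam⟫ :=
    (pos_or_neg_pos _ hδΔ).resolve_right fun h =>
      hindec β hβ _ (hΔ.neg_mem hδΔ) hβpos h (by abel)
  have hδα : β - α ≠ α := by
    intro h
    have := hΔ.eq_one_or_eq_neg_one_of_smul_mem α hαΔ 2
      (by rwa [two_smul, ← sub_eq_iff_eq_add.1 h])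
    norm_num at this
  have hsδ := ih (β - α) hδΔ (by rw [inner_sub_left]; linarith) hδpos hδα
  have hrefl : rootReflection α (β - α) = rootReflection α β + α := by
    have hc : 2 * ⟪β - α, α⟫ / ⟪α, α⟫ = 2 * ⟪β, α⟫ / ⟪α, α⟫ - 2 := by
      rw [inner_sub_left]
      field_simp
    rw [rootReflection, rootReflection, hc]
    module
  exact hindec _ (hΔ.rootReflection_mem α hαΔ _ hδΔ) _
    (hΔ.neg_mem (hΔ.rootReflection_mem α hαΔ β hβ)) hsδ hsβ (by rw [hrefl]; abel)

theorem inner_sum_positiveRoots (hα : IsSimpleRoot Δ lam α) (hΔ : IsReducedRootSystem Δ)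
    (hreg : ∀ β ∈ Δ, ⟪β, lam⟫ ≠ 0) :
    ⟪∑ β ∈ positiveRoots Δ lam, β, α⟫ = ⟪α, α⟫ := by
  classical
  have hαP : α ∈ positiveRoots Δ lam := mem_positiveRoots.2 ⟨hα.1, hα.2.1⟩
  have hmaps : ∀ β ∈ (positiveRoots Δ lam).erase α,
      rootReflection α β ∈ (positiveRoots Δ lam).erase α := by
    intro β hβ
    obtain ⟨hβα, hβΔ, hβpos⟩ := by simpa using hβ
    refine mem_erase.2 ⟨fun h => ?_, mem_positiveRoots.2 ⟨hΔ.rootReflection_mem α hα.1 β hβΔ,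
      hα.rootReflection_pos hΔ hreg β hβΔ hβpos hβα⟩⟩
    have hβ_neg : β = -α := by
      rw [← rootReflection_self, ← rootReflection_rootReflection α β, h]
    rw [hβ_neg, inner_neg_left] at hβpos
    linarith [hα.2.1]
  have hzero : ∑ β ∈ (positiveRoots Δ lam).erase α, ⟪β, α⟫ = 0 := by
    have := Finset.sum_nbij' (rootReflection α) (rootReflection α) hmaps hmaps
      (fun β _ => rootReflection_rootReflection α β) (fun β _ => rootReflection_rootReflection α β)
      (f := fun β => ⟪β, α⟫) (g := fun β => -⟪β, α⟫)
      (fun β _ => by rw [inner_rootReflection_self, neg_neg])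
    rw [sum_neg_distrib] at this
    linarith
  rw [sum_inner, ← sum_erase_add _ _ hαP, hzero, zero_add]

theorem inner_sub_half_sum_positiveRoots_nonneg (hα : IsSimpleRoot Δ lam α)
    (hΔ : IsReducedRootSystem Δ) (hreg : ∀ β ∈ Δ, ⟪β, lam⟫ ≠ 0)
    (hadm : ∃ n : ℤ, 2 * ⟪lam - (2 : ℝ)⁻¹ • ∑ β ∈ positiveRoots Δ lam, β, α⟫ /
      ⟪α, α⟫ = n) :
    0 ≤ ⟪lam - (2 : ℝ)⁻¹ • ∑ β ∈ positiveRoots Δ lam, β, α⟫ := by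
  obtain ⟨n, hn⟩ := hadm
  have hαα := real_inner_self_pos.2 (hΔ.ne_zero hα.1)
  have hlam : 0 < ⟪lam, α⟫ := real_inner_comm lam α ▸ hα.2.1
  rw [inner_sub_left, real_inner_smul_left, hα.inner_sum_positiveRoots hΔ hreg] at hn ⊢
  have hn' : (n + 1 : ℝ) * ⟪α, α⟫ = 2 * ⟪lam, α⟫ := by
    rw [← hn]
    field_simp
    ring
  have hn_gt : (-1 : ℝ) < n := by nlinarith
  have hn_nonneg : (0 : ℝ) ≤ n := by exact_mod_cast (show (-1 : ℤ) < n by exact_mod_cast hn_gt)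
  nlinarith

end IsSimpleRoot

end

theorem regular_admissible_very_regular_general
    {E : Type*} [NormedAddCommGroup E] [InnerProductSpace ℝ E]
    (Δ : Finset E)
    (hΔ0 : (0 : E) ∉ Δ)
    (hΔred : ∀ α ∈ Δ, ∀ t : ℝ, t • α ∈ Δ → t = 1 ∨ t = -1)
    (hΔrefl : ∀ α ∈ Δ, ∀ β ∈ Δ, β - (2 * ⟪β, α⟫ / ⟪α, α⟫) • α ∈ Δ)
    (hΔcrys : ∀ α ∈ Δ, ∀ β ∈ Δ, ∃ n : ℤ, 2 * ⟪β, α⟫ / ⟪α, α⟫ = (n : ℝ))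
    (lam : E)
    (hreg : ∀ α ∈ Δ, ⟪lam, α⟫ ≠ 0)
    (ρlam : E) (hρlam : ρlam = (2 : ℝ)⁻¹ • ∑ α ∈ Δ.filter (fun α => 0 < ⟪α, lam⟫), α)
    (hadm : ∀ α ∈ Δ, ∃ n : ℤ, 2 * ⟪lam - ρlam, α⟫ / ⟪α, α⟫ = (n : ℝ)) :
    ∀ α ∈ Δ, 0 < ⟪α, lam⟫ → 0 ≤ ⟪lam - ρlam, α⟫ := by
  have hΔ : IsReducedRootSystem Δ := ⟨hΔ0, hΔred, hΔrefl, hΔcrys⟩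
  have hreg' : ∀ α ∈ Δ, ⟪α, lam⟫ ≠ 0 := fun α hα => real_inner_comm α lam ▸ hreg α hα
  subst hρlam
  exact inner_nonneg_of_isSimpleRoot fun α hα =>
    hα.inner_sub_half_sum_positiveRoots_nonneg hΔ hreg' (hadm α hα.1)

theorem regular_admissible_very_regular
    {E : Type*} [NormedAddCommGroup E] [InnerProductSpace ℝ E] [FiniteDimensional ℝ E]
    (Δ : Finset E)
    (hΔ0 : (0 : E) ∉ Δ)
    (hΔred : ∀ α ∈ Δ, ∀ t : ℝ, t • α ∈ Δ → t = 1 ∨ t = -1)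
    (hΔrefl : ∀ α ∈ Δ, ∀ β ∈ Δ, β - (2 * ⟪β, α⟫ / ⟪α, α⟫) • α ∈ Δ)
    (hΔcrys : ∀ α ∈ Δ, ∀ β ∈ Δ, ∃ n : ℤ, 2 * ⟪β, α⟫ / ⟪α, α⟫ = (n : ℝ))
    (v : E) (hv : ∀ α ∈ Δ, ⟪α, v⟫ ≠ 0)
    (Δpos : Finset E) (hΔpos : Δpos = Δ.filter (fun α => 0 < ⟪α, v⟫))
    (ρ : E) (hρ : ρ = (2 : ℝ)⁻¹ • ∑ α ∈ Δpos, α)    (lam : E)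
    (hreg : ∀ α ∈ Δ, ⟪lam, α⟫ ≠ 0)
    (ρlam : E) (hρlam : ρlam = (2 : ℝ)⁻¹ • ∑ α ∈ Δ.filter (fun α => 0 < ⟪α, lam⟫), α)
    (hadm : ∀ α ∈ Δ, ∃ n : ℤ, 2 * ⟪lam - ρlam, α⟫ / ⟪α, α⟫ = (n : ℝ)) :
    ∀ α ∈ Δ, 0 < ⟪α, lam⟫ → 0 ≤ ⟪lam - ρlam, α⟫ :=
  regular_admissible_very_regular_general Δ hΔ0 hΔred hΔrefl hΔcrys lam hreg ρlam hρlam hadm
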